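/- Let α > 2, a > 0 and c > 0, and define g_a(y) = ∫₀^∞ a/(a + (x² + y²)^{α/2}) dx for y ≥ 0. Then the integral ∫₀^∞ (1 − exp(−c · g_a(y))) dy is finite and satisfies ∫₀^∞ (1 − exp(−c · g_a(y))) dy ≤ c · (π/2) · a^{2/α} · (π/α) · csc(2π/α). -/

import Mathlib

open MeasureTheory Real

/-- The inner integral `g_a(y) = ∫₀^∞ a / (a + (x² + y²)^(α/2)) dx`. -/
noncomputable def gInner (α a y : ℝ) : ℝ :=
  ∫ x in Set.Ioi (0 : ℝ), a / (a + (x ^ 2 + y ^ 2) ^ (α / 2))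

/-!
Since `0 ≤ 1 - exp (-t) ≤ t` for `t ≥ 0`, it suffices to bound `c ∫₀^∞ g_a`. By symmetry this is
a quarter of the integral of the radial function `a / (a + |p|^α)` over the plane, which polar
coordinates turn into `(π / 2) ∫₀^∞ r a / (a + r^α) dr`. The substitutions `r = (a t)^(1/α)` and
`t = u / (1 - u)` reduce the latter to the Beta integral `B(2/α, 1 - 2/α) = π / sin (2π/α)`.

None of these changes of variables needs an integrability hypothesis, so the nonzero values they
produce certify integrability along the way (`Integrable.of_integral_ne_zero`).
-/

open Set

theorem integral_rpow_mul_one_sub_rpow_neg {s : ℝ} (hs₀ : 0 < s) (hs₁ : s < 1) :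
    ∫ x in (0 : ℝ)..1, x ^ (s - 1) * (1 - x) ^ (-s) = π / sin (π * s) := by
  have hbeta : Complex.betaIntegral s (1 - s) = π / Complex.sin (π * s) := by
    rw [← Complex.Gamma_mul_Gamma_one_sub, Complex.Gamma_mul_Gamma_eq_betaIntegral
      (by simpa using hs₀) (by simpa using hs₁), add_sub_cancel, Complex.Gamma_one, one_mul]
  have hreal : Complex.betaIntegral s (1 - s) =
      ↑(∫ x in (0 : ℝ)..1, x ^ (s - 1) * (1 - x) ^ (-s)) := by
    rw [Complex.betaIntegral, ← intervalIntegral.integral_ofReal]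
    refine intervalIntegral.integral_congr fun x hx => ?_
    rw [uIcc_of_le zero_le_one] at hx
    push_cast [Complex.ofReal_cpow hx.1, Complex.ofReal_cpow (sub_nonneg.2 hx.2)]
    ring_nf
  exact_mod_cast hreal.symm.trans hbeta

theorem integral_Ioi_rpow_div_one_add {s : ℝ} (hs₀ : 0 < s) (hs₁ : s < 1) :
    ∫ t in Ioi (0 : ℝ), t ^ (s - 1) / (1 + t) = π / sin (π * s) := by
  set φ : ℝ → ℝ := fun u => u / (1 - u)
  have hφ' : ∀ u ∈ Ioo (0 : ℝ) 1, HasDerivWithinAt φ ((1 - u) ^ 2)⁻¹ (Ioo 0 1) u := by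
    intro u hu
    have h1u : 1 - u ≠ 0 := by linarith [hu.2]
    have h : HasDerivAt φ ((1 * (1 - u) - u * (0 - 1)) / (1 - u) ^ 2) u :=
      (hasDerivAt_id' u).div ((hasDerivAt_const u 1).sub (hasDerivAt_id' u)) h1u
    exact h.hasDerivWithinAt.congr_deriv (by field_simp; ring)
  have hφ_inj : InjOn φ (Ioo 0 1) := by
    intro x hx y hy hxy
    have : x * (1 - y) = y * (1 - x) := by
      rwa [div_eq_div_iff (by linarith [hx.2]) (by linarith [hy.2])] at hxy
    linarith
  have hφ_image : φ '' Ioo 0 1 = Ioi 0 := by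
    refine Subset.antisymm ?_ fun (t : ℝ) (ht : 0 < t) => ⟨t / (1 + t), ⟨by positivity, ?_⟩, ?_⟩
    · rintro _ ⟨u, hu, rfl⟩
      exact div_pos hu.1 (by linarith [hu.2])
    · rw [div_lt_one (by linarith)]; linarith
    · simp only [φ]
      field_simp
      ring
  rw [← hφ_image, integral_image_eq_integral_abs_deriv_smul measurableSet_Ioo hφ' hφ_inj,
    ← integral_rpow_mul_one_sub_rpow_neg hs₀ hs₁, intervalIntegral.integral_of_le zero_le_one,
    integral_Ioc_eq_integral_Ioo]
  refine setIntegral_congr_fun measurableSet_Ioo fun u hu => ?_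
  have h1u : 0 < 1 - u := by linarith [hu.2]
  have hφu : 1 + φ u = (1 - u)⁻¹ := by simp only [φ]; field_simp; ring
  rw [smul_eq_mul, abs_of_pos (by positivity), hφu, div_rpow hu.1.le h1u.le,
    rpow_sub_one h1u.ne', rpow_neg h1u.le]
  have : 1 - u ≠ 0 := h1u.ne'
  field_simp

theorem integral_Ioi_mul_div_add_rpow {α a : ℝ} (hα : 2 < α) (ha : 0 < a) :
    ∫ r in Ioi (0 : ℝ), r * (a / (a + r ^ α)) = a ^ (2 / α) * (π / α) / sin (2 * π / α) := by
  have hα₀ : 0 < α := by linarith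
  have hsubst : ∫ r in Ioi (0 : ℝ), r * (a / (a + r ^ α)) =
      α⁻¹ * ∫ t in Ioi (0 : ℝ), t ^ (2 / α - 1) * (a / (a + t)) := by
    rw [← integral_const_mul,
      ← integral_comp_rpow_Ioi (fun t => α⁻¹ * (t ^ (2 / α - 1) * (a / (a + t)))) hα₀.ne']
    refine setIntegral_congr_fun measurableSet_Ioi fun r (hr : 0 < r) => ?_
    have hpow : r ^ (α - 1) * (r ^ α) ^ (2 / α - 1) = r := by
      rw [← rpow_mul hr.le, ← rpow_add hr]
      convert rpow_one r using 2
      field_simp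
      ring
    rw [smul_eq_mul, abs_of_pos hα₀]
    calc r * (a / (a + r ^ α))
        = r ^ (α - 1) * (r ^ α) ^ (2 / α - 1) * (a / (a + r ^ α)) := by rw [hpow]
      _ = _ := by field_simp
  have hscale : ∫ t in Ioi (0 : ℝ), t ^ (2 / α - 1) * (a / (a + t)) =
      a ^ (2 / α) * ∫ t in Ioi (0 : ℝ), t ^ (2 / α - 1) / (1 + t) := by
    have h := integral_comp_mul_left_Ioi (fun t => t ^ (2 / α - 1) * (a / (a + t))) 0 ha
    rw [mul_zero, eq_inv_smul_iff₀ ha.ne', smul_eq_mul] at h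
    rw [← h, ← integral_const_mul, ← integral_const_mul]
    refine setIntegral_congr_fun measurableSet_Ioi fun (t : ℝ) (ht : 0 < t) => ?_
    rw [mul_rpow ha.le ht.le, rpow_sub_one ha.ne']
    field_simp
  have hs₁ : 2 / α < 1 := by rw [div_lt_one hα₀]; exact hα
  rw [hsubst, hscale, integral_Ioi_rpow_div_one_add (by positivity) hs₁,
    show π * (2 / α) = 2 * π / α by ring]
  ring

theorem rpow_mul_pi_div_div_sin_pos {α a : ℝ} (hα : 2 < α) (ha : 0 < a) :
    0 < a ^ (2 / α) * (π / α) / sin (2 * π / α) := by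
  have hα₀ : 0 < α := by linarith
  have hsin : 0 < sin (2 * π / α) :=
    sin_pos_of_pos_of_lt_pi (by positivity) (by rw [div_lt_iff₀ hα₀]; nlinarith [pi_pos])
  positivity

theorem integral_comp_sq_add_sq (f : ℝ → ℝ) :
    ∫ p : ℝ × ℝ, f (p.1 ^ 2 + p.2 ^ 2) = 2 * π * ∫ r in Ioi (0 : ℝ), r * f (r ^ 2) := by
  have h := setIntegral_prod_mul (μ := volume) (ν := volume) (fun r => r * f (r ^ 2))
    (fun _ => (1 : ℝ)) (Ioi 0) (Ioo (-π) π)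
  rw [setIntegral_const, volume_real_Ioo_of_le (by linarith [pi_pos])] at h
  rw [← integral_comp_polarCoord_symm, polarCoord_target, Measure.volume_eq_prod]
  simp only [polarCoord_symm_apply, mul_pow, ← mul_add, cos_sq_add_sin_sq, mul_one,
    smul_eq_mul] at h ⊢
  rw [h]
  ring

theorem integral_comp_sq_add_sq_eq_four_mul {f : ℝ → ℝ}
    (hf : Integrable fun p : ℝ × ℝ => f (p.1 ^ 2 + p.2 ^ 2)) :
    ∫ p : ℝ × ℝ, f (p.1 ^ 2 + p.2 ^ 2) =
      4 * ∫ y in Ioi (0 : ℝ), ∫ x in Ioi (0 : ℝ), f (x ^ 2 + y ^ 2) := by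
  rw [Measure.volume_eq_prod] at hf ⊢
  rw [integral_prod_symm _ hf]
  calc ∫ y, ∫ x, f (x ^ 2 + y ^ 2)
      = ∫ y, 2 * ∫ x in Ioi (0 : ℝ), f (x ^ 2 + |y| ^ 2) := by
        simp only [sq_abs, ← integral_comp_abs (f := fun x => f (x ^ 2 + _))]
    _ = 4 * ∫ y in Ioi (0 : ℝ), ∫ x in Ioi (0 : ℝ), f (x ^ 2 + y ^ 2) := by
        rw [integral_const_mul,
          integral_comp_abs (f := fun y => ∫ x in Ioi (0 : ℝ), f (x ^ 2 + y ^ 2))]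
        ring

theorem abs_one_sub_exp_neg_le {t : ℝ} (ht : 0 ≤ t) : |1 - exp (-t)| ≤ t := by
  rw [abs_of_nonneg (sub_nonneg.2 (exp_le_one_iff.2 (neg_nonpos.2 ht)))]
  linarith [add_one_le_exp (-t)]

section OneSubExpNeg

variable {X : Type*} [MeasurableSpace X] {μ : Measure X} {s : Set X} {g : X → ℝ} {c : ℝ}

theorem integrableOn_one_sub_exp_neg_mul (hg : IntegrableOn g s μ) (hg₀ : ∀ x, 0 ≤ g x)
    (hc : 0 ≤ c) : IntegrableOn (fun x => 1 - exp (-(c * g x))) s μ :=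
  (hg.const_mul c).mono'
    ((by fun_prop : Continuous fun t => 1 - exp (-(c * t))).comp_aestronglyMeasurable
      hg.aestronglyMeasurable)
    (ae_of_all _ fun x => abs_one_sub_exp_neg_le (mul_nonneg hc (hg₀ x)))

theorem integral_one_sub_exp_neg_mul_le (hg : IntegrableOn g s μ) (hg₀ : ∀ x, 0 ≤ g x)
    (hc : 0 ≤ c) : ∫ x in s, 1 - exp (-(c * g x)) ∂μ ≤ c * ∫ x in s, g x ∂μ := by
  rw [← integral_const_mul]
  exact integral_mono (integrableOn_one_sub_exp_neg_mul hg hg₀ hc) (hg.const_mul c)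
    fun x => (le_abs_self _).trans (abs_one_sub_exp_neg_le (mul_nonneg hc (hg₀ x)))

end OneSubExpNeg

theorem gInner_nonneg {α a : ℝ} (ha : 0 ≤ a) (y : ℝ) : 0 ≤ gInner α a y :=
  integral_nonneg fun x => div_nonneg ha (add_nonneg ha (rpow_nonneg (by positivity) _))

theorem integral_Ioi_gInner {α a : ℝ} (hα : 2 < α) (ha : 0 < a) :
    ∫ y in Ioi (0 : ℝ), gInner α a y = π / 2 * (a ^ (2 / α) * (π / α) / sin (2 * π / α)) := by
  set f : ℝ → ℝ := fun t => a / (a + t ^ (α / 2))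
  have hradial : ∫ r in Ioi (0 : ℝ), r * f (r ^ 2) = a ^ (2 / α) * (π / α) / sin (2 * π / α) := by
    rw [← integral_Ioi_mul_div_add_rpow hα ha]
    refine setIntegral_congr_fun measurableSet_Ioi fun (r : ℝ) (hr : 0 < r) => ?_
    change r * (a / (a + (r ^ 2) ^ (α / 2))) = _
    rw [← rpow_natCast, ← rpow_mul hr.le, Nat.cast_ofNat, mul_div_cancel₀ _ two_ne_zero]
  have hplane := integral_comp_sq_add_sq f
  rw [hradial] at hplane
  have hint : Integrable fun p : ℝ × ℝ => f (p.1 ^ 2 + p.2 ^ 2) :=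
    .of_integral_ne_zero (by rw [hplane]; have := rpow_mul_pi_div_div_sin_pos hα ha; positivity)
  have hquarter := integral_comp_sq_add_sq_eq_four_mul hint
  change ∫ y in Ioi (0 : ℝ), ∫ x in Ioi (0 : ℝ), f (x ^ 2 + y ^ 2) = _
  linarith

/-- Let `α > 2`, `a > 0` and `c > 0`. Then the integral
`∫₀^∞ (1 − exp(−c · g_a(y))) dy` is finite and satisfies
`∫₀^∞ (1 − exp(−c · g_a(y))) dy ≤ c · (π/2) · a^(2/α) · (π/α) · csc(2π/α)`. -/
theorem integral_one_sub_exp_neg_gInner (α a c : ℝ) (hα : 2 < α) (ha : 0 < a)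
    (hc : 0 < c) :
    IntegrableOn (fun y : ℝ => 1 - Real.exp (-(c * gInner α a y))) (Set.Ioi 0) ∧
    (∫ y in Set.Ioi (0 : ℝ), (1 - Real.exp (-(c * gInner α a y))))
      ≤ c * (π / 2) * a ^ (2 / α) * (π / α) * (Real.sin (2 * π / α))⁻¹ := by
  have hvalue := integral_Ioi_gInner hα ha
  have hint : IntegrableOn (gInner α a) (Ioi 0) := .of_integral_ne_zero (by
    rw [hvalue]; have := rpow_mul_pi_div_div_sin_pos hα ha; positivity)
  refine ⟨integrableOn_one_sub_exp_neg_mul hint (gInner_nonneg ha.le) hc.le, ?_⟩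
  calc ∫ y in Ioi (0 : ℝ), 1 - exp (-(c * gInner α a y))
      ≤ c * ∫ y in Ioi (0 : ℝ), gInner α a y :=
        integral_one_sub_exp_neg_mul_le hint (gInner_nonneg ha.le) hc.le
    _ = _ := by rw [hvalue]; ring
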